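/- The four-qubit symmetric states ψ = (1/(2√2))ω₀ + (√3/2)ω₂ + (1/(2√2))ω₄ and φ = (1/√2)ω₁ + (1/√2)ω₃ have identical two-qubit reduced density matrices, yet ⟨ψ|φ⟩ = 0; hence ψ is not uniquely determined among pure states by its 2-RDMs. -/

import Mathlib

open Matrix Complex

/-- Two-qubit reduced density matrix of a four-qubit pure state `ψ`, keeping qubits
`j` and `k` and tracing out the other two qubits. -/
noncomputable def rdm2 (ψ : (Fin 4 → Fin 2) → ℂ) (j k : Fin 4) :
    Matrix (Fin 2 × Fin 2) (Fin 2 × Fin 2) ℂ :=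
  fun a b => ∑ f : Fin 4 → Fin 2,
    if f j = a.1 ∧ f k = a.2 then
      ψ f * (starRingEnd ℂ) (ψ (Function.update (Function.update f j b.1) k b.2))
    else 0

/-- Number of qubits in state `|1⟩` for a computational basis label `f`. -/
def weight (f : Fin 4 → Fin 2) : ℕ := (Finset.univ.filter fun i => f i = 1).card

/-- Inner product `⟨ψ|φ⟩` of four-qubit states. -/
noncomputable def inner4 (ψ φ : (Fin 4 → Fin 2) → ℂ) : ℂ :=
  ∑ f : Fin 4 → Fin 2, (starRingEnd ℂ) (ψ f) * φ f

/-- The state `ψ = (1/(2√2)) ω₀ + (√3/2) ω₂ + (1/(2√2)) ω₄` (each `ωᵢ` a normalized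
Dicke state written in the computational basis). -/
noncomputable def psiInter : (Fin 4 → Fin 2) → ℂ := fun f =>
  if weight f = 0 then ((1 / (2 * Real.sqrt 2) : ℝ) : ℂ)
  else if weight f = 2 then (((Real.sqrt 3 / 2) / Real.sqrt 6 : ℝ) : ℂ)
  else if weight f = 4 then ((1 / (2 * Real.sqrt 2) : ℝ) : ℂ)
  else 0

/-- The state `φ = (1/√2) ω₁ + (1/√2) ω₃`. -/
noncomputable def phiInter : (Fin 4 → Fin 2) → ℂ := fun f =>
  if weight f = 1 then (((1 / Real.sqrt 2) / 2 : ℝ) : ℂ)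
  else if weight f = 3 then (((1 / Real.sqrt 2) / 2 : ℝ) : ℂ)
  else 0

lemma weight_le (f : Fin 4 → Fin 2) : weight f ≤ 4 := by
  have := Finset.card_filter_le (Finset.univ : Finset (Fin 4)) (fun i => f i = 1)
  simpa [weight] using this

lemma lem1 : (Real.sqrt 3 / 2) / Real.sqrt 6 = 1 / (2 * Real.sqrt 2) := by
  rw [show (6:ℝ) = 2 * 3 by norm_num, Real.sqrt_mul (by norm_num)]
  have h3 : Real.sqrt 3 ≠ 0 := by positivity
  have h2 : Real.sqrt 2 ≠ 0 := by positivity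
  field_simp

lemma lem2 : (1 / Real.sqrt 2) / 2 = 1 / (2 * Real.sqrt 2) := by
  ring

lemma lem3 : ((1 / (2 * Real.sqrt 2) : ℝ) : ℂ) * ((1 / (2 * Real.sqrt 2) : ℝ) : ℂ) = (1/8 : ℂ) := by
  rw [← Complex.ofReal_mul]
  have h2 : Real.sqrt 2 * Real.sqrt 2 = 2 := Real.mul_self_sqrt (by norm_num)
  have h2' : Real.sqrt 2 ≠ 0 := by positivity
  have : (1 / (2 * Real.sqrt 2) : ℝ) * (1 / (2 * Real.sqrt 2)) = 1/8 := by
    field_simp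
    nlinarith [h2]
  rw [this]
  norm_num

lemma psi_eq (f : Fin 4 → Fin 2) :
    psiInter f = if weight f % 2 = 0 then ((1 / (2 * Real.sqrt 2) : ℝ) : ℂ) else 0 := by
  have h := weight_le f
  unfold psiInter
  split_ifs <;> first | rfl | (exfalso; omega) | (rw [lem1])

lemma phi_eq (f : Fin 4 → Fin 2) :
    phiInter f = if weight f % 2 = 1 then ((1 / (2 * Real.sqrt 2) : ℝ) : ℂ) else 0 := by
  have h := weight_le f
  unfold phiInter
  split_ifs <;> first | rfl | (exfalso; omega) | (rw [lem2])

lemma prod_psi (f g : Fin 4 → Fin 2) :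
    psiInter f * (starRingEnd ℂ) (psiInter g) =
      if weight f % 2 = 0 ∧ weight g % 2 = 0 then (1/8 : ℂ) else 0 := by
  rw [psi_eq f, psi_eq g, apply_ite (starRingEnd ℂ), map_zero, Complex.conj_ofReal, ite_and]
  split_ifs with h1 h2 <;> first | exact lem3 | simp

lemma prod_phi (f g : Fin 4 → Fin 2) :
    phiInter f * (starRingEnd ℂ) (phiInter g) =
      if weight f % 2 = 1 ∧ weight g % 2 = 1 then (1/8 : ℂ) else 0 := by
  rw [phi_eq f, phi_eq g, apply_ite (starRingEnd ℂ), map_zero, Complex.conj_ofReal, ite_and]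
  split_ifs with h1 h2 <;> first | exact lem3 | simp

lemma count_eq : ∀ j k : Fin 4, j ≠ k → ∀ a b : (Fin 2 × Fin 2),
    (Finset.univ.filter fun f : Fin 4 → Fin 2 =>
      (f j = a.1 ∧ f k = a.2) ∧ weight f % 2 = 0 ∧
        weight (Function.update (Function.update f j b.1) k b.2) % 2 = 0).card =
    (Finset.univ.filter fun f : Fin 4 → Fin 2 =>
      (f j = a.1 ∧ f k = a.2) ∧ weight f % 2 = 1 ∧
        weight (Function.update (Function.update f j b.1) k b.2) % 2 = 1).card := by
  decide

/-- `ψ = (1/(2√2))ω₀ + (√3/2)ω₂ + (1/(2√2))ω₄` and `φ = (1/√2)ω₁ + (1/√2)ω₃` share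
identical two-qubit reduced density matrices, yet `⟨ψ|φ⟩ = 0`; hence `ψ` is not
uniquely determined among pure states by its 2-RDMs. -/
theorem psiInter_not_udp :
    (∀ j k : Fin 4, j ≠ k → rdm2 psiInter j k = rdm2 phiInter j k) ∧
    inner4 psiInter phiInter = 0 := by
  constructor
  · intro j k hjk
    funext a b
    unfold rdm2
    have hψ : ∀ f : Fin 4 → Fin 2,
        (if f j = a.1 ∧ f k = a.2 then
          psiInter f * (starRingEnd ℂ)
            (psiInter (Function.update (Function.update f j b.1) k b.2)) else 0) =
        (if (f j = a.1 ∧ f k = a.2) ∧ weight f % 2 = 0 ∧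
            weight (Function.update (Function.update f j b.1) k b.2) % 2 = 0
          then (1/8 : ℂ) else 0) := by
      intro f
      rw [prod_psi]
      by_cases h : f j = a.1 ∧ f k = a.2 <;> simp [h]
    have hφ : ∀ f : Fin 4 → Fin 2,
        (if f j = a.1 ∧ f k = a.2 then
          phiInter f * (starRingEnd ℂ)
            (phiInter (Function.update (Function.update f j b.1) k b.2)) else 0) =
        (if (f j = a.1 ∧ f k = a.2) ∧ weight f % 2 = 1 ∧
            weight (Function.update (Function.update f j b.1) k b.2) % 2 = 1
          then (1/8 : ℂ) else 0) := by
      intro f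
      rw [prod_phi]
      by_cases h : f j = a.1 ∧ f k = a.2 <;> simp [h]
    simp only [hψ, hφ]
    rw [Finset.sum_ite, Finset.sum_ite]
    simp only [Finset.sum_const, Finset.sum_const_zero, smul_zero, add_zero]
    rw [count_eq j k hjk a b]
  · unfold inner4
    apply Finset.sum_eq_zero
    intro f _
    rw [psi_eq, phi_eq]
    split_ifs with h1 h2 <;> simp_all
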